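/- (Claim 7) Let n ≥ 3, 1 ≤ r ≤ n−2 and 2 ≤ s ≤ k−1 be integers, and let A ⊆ [k]^n be a compressed set with B_{≥r+1} ∪ ([s]^n ∩ B_r) ⊆ A ⊆ B_{≥r+1} ∪ ([s+1]^n ∩ B_r), where [m]^n = {0,…,m−1}^n. Set D = A ∩ B_r and let 𝒜 be the collection of nonempty subsets of {1,…,n} of size at most n−r. Suppose X ∈ 𝒜 satisfies |X| = 1 and C_X ∩ D ≠ ∅, where C_X = {x ∈ [k]^n : m(x) = s, R_s(x) = X, |R_0(x)| = r}. Then for every S ∈ 𝒜 with S <_bin X we have d(C_S) ⊆ d(D). -/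

import Mathlib

open Finset
open scoped Classical

/-- `R_i(x)`: the set of coordinates of `x` equal to `i`.
The ambient alphabet is `[k+1] = {0,…,k}`. -/
noncomputable def rset {k N : ℕ} (x : Fin N → Fin (k + 1)) (i : ℕ) : Finset (Fin N) :=
  Finset.univ.filter fun j => (x j : ℕ) = i

/-- the strict binary order on finite sets of coordinates:
`X <_bin Y` iff `X ≠ Y` and `max (X Δ Y) ∈ Y`. -/
def binLT {N : ℕ} (X Y : Finset (Fin N)) : Prop :=
  ∃ m ∈ Y, m ∉ X ∧ ∀ j : Fin N, ((j ∈ X ∧ j ∉ Y) ∨ (j ∈ Y ∧ j ∉ X)) → j ≤ m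

/-- the strict `≤`-order on `[k+1]^N`: `x < y` iff `|R_0(x)| > |R_0(y)|`, or
`|R_0(x)| = |R_0(y)|` and for the largest `i` with `R_i(x) ≠ R_i(y)` we have
`max (R_i(x) Δ R_i(y)) ∈ R_i(y)`. -/
def plt {k N : ℕ} (x y : Fin N → Fin (k + 1)) : Prop :=
  (rset y 0).card < (rset x 0).card ∨
    ((rset x 0).card = (rset y 0).card ∧
      ∃ i : ℕ, binLT (rset x i) (rset y i) ∧ ∀ j : ℕ, i < j → rset x j = rset y j)

/-- the `≤`-order on `[k+1]^N`. -/
def ple {k N : ℕ} (x y : Fin N → Fin (k + 1)) : Prop := x = y ∨ plt x y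

/-- `B` is an initial segment of the `≤`-order. -/
def isInitSeg {k N : ℕ} (B : Finset (Fin N → Fin (k + 1))) : Prop :=
  ∀ y ∈ B, ∀ x, ple x y → x ∈ B

/-- the `d`-shadow: all points obtained from a point of `A` by flipping one
nonzero coordinate to `0`. -/
noncomputable def dShadow {k N : ℕ} (A : Finset (Fin N → Fin (k + 1))) :
    Finset (Fin N → Fin (k + 1)) :=
  A.biUnion fun x =>
    (Finset.univ.filter fun i => x i ≠ 0).image fun i => Function.update x i 0

/-- the initial segment of the `≤`-order on `[k+1]^N` of cardinality `m`. -/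
noncomputable def initSeg (k N m : ℕ) : Finset (Fin N → Fin (k + 1)) :=
  Finset.univ.filter fun x => (Finset.univ.filter fun y => ple y x).card ≤ m

/-- the `C_s`-compression of `A ⊆ [k+1]^(n+1)`: replace each slice
`A_{s,t} = {y : t_s y ∈ A}` by the initial segment of the same size. -/
noncomputable def compress {k n : ℕ} (s : Fin (n + 1)) (A : Finset (Fin (n + 1) → Fin (k + 1))) :
    Finset (Fin (n + 1) → Fin (k + 1)) :=
  Finset.univ.biUnion fun t : Fin (k + 1) =>
    (initSeg k n
        (Finset.univ.filter fun y : Fin n → Fin (k + 1) => s.insertNth t y ∈ A).card).image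
      fun y => s.insertNth t y

/-- `A` is compressed if every `C_s`-compression fixes it. -/
def IsCompressed {k n : ℕ} (A : Finset (Fin (n + 1) → Fin (k + 1))) : Prop :=
  ∀ s : Fin (n + 1), compress s A = A

/-- `B_r`: points with exactly `r` zero coordinates. -/
noncomputable def Bexact (k N r : ℕ) : Finset (Fin N → Fin (k + 1)) :=
  Finset.univ.filter fun x => (rset x 0).card = r

/-- `B_{≥r}`: points with at least `r` zero coordinates. -/
noncomputable def Bge (k N r : ℕ) : Finset (Fin N → Fin (k + 1)) :=
  Finset.univ.filter fun x => r ≤ (rset x 0).card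

/-- `m(x)`: the largest coordinate value of `x`. -/
noncomputable def mval {k N : ℕ} (x : Fin N → Fin (k + 1)) : ℕ :=
  Finset.univ.sup fun i => (x i : ℕ)

/-- the class `C_X`: points with maximal coordinate `s`, attained exactly on `X`,
and exactly `r` zero coordinates. -/
noncomputable def classSet (k N s r : ℕ) (X : Finset (Fin N)) : Finset (Fin N → Fin (k + 1)) :=
  Finset.univ.filter fun x => mval x = s ∧ rset x s = X ∧ (rset x 0).card = r

/-- `[m]^N = {0,…,m−1}^N`. -/
noncomputable def box (k N m : ℕ) : Finset (Fin N → Fin (k + 1)) :=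
  Finset.univ.filter fun x => ∀ i, (x i : ℕ) < m

/-- `{1,…,s−1}^N`. -/
noncomputable def box1 (k N s : ℕ) : Finset (Fin N → Fin (k + 1)) :=
  Finset.univ.filter fun x => ∀ i, 1 ≤ (x i : ℕ) ∧ (x i : ℕ) ≤ s - 1

/-- `B` is a down-set. -/
def isDownSet {k N : ℕ} (B : Finset (Fin N → Fin (k + 1))) : Prop :=
  ∀ y ∈ B, ∀ x : Fin N → Fin (k + 1), (∀ j, (x j : ℕ) ≤ (y j : ℕ)) → x ∈ B

/-!
The order `plt` is the lexicographic order of the key `pltKey`: the number of zeros, reversed,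
followed by the level sets `R_i` in colex order, read from the top level down. Hence it is
transitive, and a set fixed by a compression `C_p` is closed downwards in every slice at `p`.

Let `X = {x₀}` and `y ∈ C_X ∩ D`. A point of `d(C_S)` is `z = x` with one nonzero coordinate
set to `0`, where `x ∈ C_S`; as `S <_bin {x₀}`, the coordinates where `z` takes the value `s`
all lie below `x₀`. Raising one zero of `z` yields `w ∈ B_r` agreeing with `y` at a coordinate
`p ≠ x₀`. In the slice at `p`, `w` precedes `y`: both have the same number of zeros, and at the
top level `s` the coordinate `x₀` of `y` beats everything `w` has there. So `w ∈ A`, and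
`z ∈ d({w}) ⊆ d(D)`.
-/

lemma mem_rset {k N : ℕ} {x : Fin N → Fin (k + 1)} {i : ℕ} {q : Fin N} :
    q ∈ rset x i ↔ (x q : ℕ) = i := by
  simp [rset]

lemma mem_rset_zero {k N : ℕ} {x : Fin N → Fin (k + 1)} {q : Fin N} : q ∈ rset x 0 ↔ x q = 0 := by
  rw [mem_rset, Fin.val_eq_zero_iff]

lemma binLT_iff_toColex_lt {N : ℕ} {X Y : Finset (Fin N)} :
    binLT X Y ↔ toColex X < toColex Y := by
  rw [Finset.Colex.toColex_lt_toColex_iff_exists_forall_lt]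
  constructor
  · rintro ⟨m, hmY, hmX, hmax⟩
    exact ⟨m, hmY, hmX, fun b hbX hbY =>
      (hmax b (Or.inl ⟨hbX, hbY⟩)).lt_of_ne (by rintro rfl; exact hmX hbX)⟩
  · rintro ⟨a, haY, haX, hlt⟩
    have hne : (Y \ X).Nonempty := ⟨a, mem_sdiff.2 ⟨haY, haX⟩⟩
    obtain ⟨hmY, hmX⟩ := mem_sdiff.1 ((Y \ X).max'_mem hne)
    refine ⟨_, hmY, hmX, fun j hj => ?_⟩
    rcases hj with ⟨hjX, hjY⟩ | ⟨hjY, hjX⟩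
    · exact (hlt j hjX hjY).le.trans ((Y \ X).le_max' a (mem_sdiff.2 ⟨haY, haX⟩))
    · exact (Y \ X).le_max' j (mem_sdiff.2 ⟨hjY, hjX⟩)

noncomputable def pltKey {k N : ℕ} (x : Fin N → Fin (k + 1)) :
    ℕᵒᵈ ×ₗ Colex (ℕ → Colex (Finset (Fin N))) :=
  toLex (OrderDual.toDual (rset x 0).card, toColex fun i => toColex (rset x i))

lemma plt_iff_pltKey_lt {k N : ℕ} {x y : Fin N → Fin (k + 1)} :
    plt x y ↔ pltKey x < pltKey y := by
  rw [pltKey, pltKey, Prod.Lex.toLex_lt_toLex]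
  simp only [OrderDual.toDual_lt_toDual, OrderDual.toDual_inj]
  refine or_congr Iff.rfl (and_congr Iff.rfl ?_)
  change _ ↔ ∃ i, (∀ j, i < j → _ = _) ∧ _ < _
  simp only [binLT_iff_toColex_lt]
  exact exists_congr fun i => and_comm

lemma plt_trans {k N : ℕ} {x y z : Fin N → Fin (k + 1)} (hxy : plt x y) (hyz : plt y z) :
    plt x z := by
  rw [plt_iff_pltKey_lt] at *
  exact hxy.trans hyz

lemma ple_trans {k N : ℕ} {x y z : Fin N → Fin (k + 1)} (hxy : ple x y) (hyz : ple y z) :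
    ple x z := by
  rcases hxy with rfl | hxy
  · exact hyz
  · rcases hyz with rfl | hyz
    · exact Or.inr hxy
    · exact Or.inr (plt_trans hxy hyz)

lemma mem_initSeg_of_ple {k N m : ℕ} {u v : Fin N → Fin (k + 1)} (hu : u ∈ initSeg k N m)
    (hvu : ple v u) : v ∈ initSeg k N m := by
  simp only [initSeg, mem_filter, mem_univ, true_and] at hu ⊢
  exact (card_le_card fun w hw => by simpa using ple_trans (by simpa using hw) hvu).trans hu

lemma mem_of_compressed_of_ple_removeNth {k n : ℕ} {A : Finset (Fin (n + 1) → Fin (k + 1))}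
    (hA : IsCompressed A) {p : Fin (n + 1)} {u v : Fin (n + 1) → Fin (k + 1)} (hu : u ∈ A)
    (hvp : v p = u p) (hvu : ple (p.removeNth v) (p.removeNth u)) : v ∈ A := by
  rw [← hA p] at hu ⊢
  simp only [compress, mem_biUnion, mem_univ, true_and, mem_image] at hu ⊢
  obtain ⟨t, y, hy, rfl⟩ := hu
  rw [Fin.insertNth_apply_same] at hvp
  rw [Fin.removeNth_insertNth] at hvu
  exact ⟨t, p.removeNth v, mem_initSeg_of_ple hy hvu, hvp ▸ Fin.insertNth_self_removeNth p v⟩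

lemma card_rset_removeNth {k n : ℕ} (x : Fin (n + 1) → Fin (k + 1)) (p : Fin (n + 1)) (i : ℕ) :
    #(rset (p.removeNth x) i) = #((rset x i).erase p) := by
  rw [← card_map p.succAboveEmb]
  congr 1
  ext q
  simp only [mem_map, Fin.coe_succAboveEmb, mem_erase, mem_rset, Fin.removeNth]
  constructor
  · rintro ⟨j, hj, rfl⟩
    exact ⟨Fin.succAbove_ne p j, hj⟩
  · rintro ⟨hqp, hq⟩
    obtain ⟨j, rfl⟩ := Fin.exists_succAbove_eq hqp
    exact ⟨j, hq, rfl⟩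

lemma plt_of_binLT_of_le {k N s : ℕ} {x y : Fin N → Fin (k + 1)}
    (h0 : #(rset x 0) = #(rset y 0)) (hx : ∀ q, (x q : ℕ) ≤ s) (hy : ∀ q, (y q : ℕ) ≤ s)
    (hs : binLT (rset x s) (rset y s)) : plt x y := by
  refine Or.inr ⟨h0, s, hs, fun j hj => ?_⟩
  ext q
  simp only [mem_rset]
  have := hx q
  have := hy q
  omega

lemma mem_of_compressed_of_agree {k n s : ℕ} {A : Finset (Fin (n + 1) → Fin (k + 1))}
    (hA : IsCompressed A) {y w : Fin (n + 1) → Fin (k + 1)} {x₀ p : Fin (n + 1)}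
    (hy : y ∈ A) (hyle : ∀ q, (y q : ℕ) ≤ s) (hys : rset y s = {x₀})
    (hwle : ∀ q, (w q : ℕ) ≤ s) (hws : ∀ q, (w q : ℕ) = s → q < x₀)
    (hw0 : #(rset w 0) = #(rset y 0)) (hp : p ≠ x₀) (hwp : w p = y p) : w ∈ A := by
  refine mem_of_compressed_of_ple_removeNth hA hy hwp (Or.inr (plt_of_binLT_of_le ?_
    (fun q => hwle _) (fun q => hyle _) ?_))
  · simp only [card_rset_removeNth, card_erase_eq_ite, mem_rset, hwp, hw0]
  · obtain ⟨j₀, rfl⟩ := Fin.exists_succAbove_eq hp.symm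
    have hys' : rset (p.removeNth y) s = {j₀} := by
      ext q
      rw [mem_rset, Fin.removeNth, ← mem_rset, hys, mem_singleton, mem_singleton,
        Fin.succAbove_right_inj]
    rw [hys', binLT_iff_toColex_lt, Finset.Colex.toColex_lt_singleton]
    intro q hq
    exact Fin.succAbove_lt_succAbove_iff.1 (hws _ (mem_rset (x := p.removeNth w).1 hq))

lemma mem_classSet {k N s r : ℕ} {X : Finset (Fin N)} {x : Fin N → Fin (k + 1)} :
    x ∈ classSet k N s r X ↔ mval x = s ∧ rset x s = X ∧ #(rset x 0) = r := by
  simp [classSet]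

lemma val_le_mval {k N : ℕ} (x : Fin N → Fin (k + 1)) (q : Fin N) : (x q : ℕ) ≤ mval x :=
  le_sup (f := fun i => (x i : ℕ)) (mem_univ q)

lemma rset_update_of_ne {k N : ℕ} (x : Fin N → Fin (k + 1)) (j : Fin N) {t : Fin (k + 1)} {i : ℕ}
    (ht : (t : ℕ) ≠ i) : rset (Function.update x j t) i = (rset x i).erase j := by
  ext q
  by_cases hq : q = j <;> simp [mem_rset, hq, ht]

lemma rset_update_zero {k N : ℕ} (x : Fin N → Fin (k + 1)) (j : Fin N) :
    rset (Function.update x j 0) 0 = insert j (rset x 0) := by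
  ext q
  by_cases hq : q = j <;> simp [mem_rset, hq]

lemma update_zero_mem_dShadow {k N : ℕ} {B : Finset (Fin N → Fin (k + 1))}
    {w : Fin N → Fin (k + 1)} {j : Fin N} (hw : w ∈ B) (hj : w j ≠ 0) :
    Function.update w j 0 ∈ dShadow B := by
  simp only [dShadow, mem_biUnion, mem_image, mem_filter, mem_univ, true_and]
  exact ⟨w, hw, j, hj, rfl⟩

lemma val_update_le {k N s : ℕ} {x : Fin N → Fin (k + 1)} (hx : ∀ q, (x q : ℕ) ≤ s) (j : Fin N)
    {t : Fin (k + 1)} (ht : (t : ℕ) ≤ s) (q : Fin N) : (Function.update x j t q : ℕ) ≤ s := by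
  rcases eq_or_ne q j with rfl | hq
  · simpa using ht
  · simpa [hq] using hx q

lemma val_eq_of_val_update_eq {k N s : ℕ} {x : Fin N → Fin (k + 1)} {j q : Fin N}
    {t : Fin (k + 1)} (ht : (t : ℕ) ≠ s) (h : (Function.update x j t q : ℕ) = s) :
    (x q : ℕ) = s := by
  rcases eq_or_ne q j with rfl | hq
  · exact absurd (by simpa using h) ht
  · simpa [hq] using h

section

variable {k n r s : ℕ} {A : Finset (Fin (n + 1) → Fin (k + 1))} {y z : Fin (n + 1) → Fin (k + 1)}
  {x₀ : Fin (n + 1)}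

lemma mem_dShadow_of_raise (hA : IsCompressed A) (hy : y ∈ A ∩ classSet k (n + 1) s r {x₀})
    (hzle : ∀ q, (z q : ℕ) ≤ s) (hzs : ∀ q, (z q : ℕ) = s → q < x₀)
    (hz0 : #(rset z 0) = r + 1) {j p : Fin (n + 1)} {t : Fin (k + 1)} (hzj : z j = 0)
    (ht0 : t ≠ 0) (hts : (t : ℕ) < s) (hp : p ≠ x₀) (hwp : Function.update z j t p = y p) :
    z ∈ dShadow (A ∩ Bexact k (n + 1) r) := by
  obtain ⟨hyA, hyC⟩ := mem_inter.1 hy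
  obtain ⟨hym, hys, hy0⟩ := mem_classSet.1 hyC
  set w := Function.update z j t
  have hwle : ∀ q, (w q : ℕ) ≤ s := val_update_le hzle j hts.le
  have hws : ∀ q, (w q : ℕ) = s → q < x₀ := fun q hq => hzs q (val_eq_of_val_update_eq hts.ne hq)
  have hw0 : #(rset w 0) = r := by
    have ht : (t : ℕ) ≠ 0 := Fin.val_ne_iff.2 ht0
    rw [rset_update_of_ne z j ht, card_erase_of_mem (mem_rset_zero.2 hzj), hz0,
      Nat.add_sub_cancel]
  have hwA : w ∈ A := mem_of_compressed_of_agree hA hyA (fun q => hym ▸ val_le_mval y q) hys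
    hwle hws (hw0.trans hy0.symm) hp hwp
  have hw : w ∈ A ∩ Bexact k (n + 1) r := mem_inter.2 ⟨hwA, by simpa [Bexact] using hw0⟩
  have hzw : Function.update w j 0 = z := by simp [w, hzj]
  exact hzw ▸ update_zero_mem_dShadow hw (by simpa [w] using ht0)

/-- A zero coordinate `j ≠ x₀` of `z` exists because `r + 1 ≥ 2`. If `y j ≠ 0`, raise `j` to
`y j`; otherwise raise another zero of `z` to `1`. Either way the raised point agrees with `y`
at `j`. -/
lemma mem_dShadow_of_compressed (hA : IsCompressed A) (hs : 2 ≤ s) (hr : 1 ≤ r)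
    (hy : y ∈ A ∩ classSet k (n + 1) s r {x₀})
    (hzle : ∀ q, (z q : ℕ) ≤ s) (hzs : ∀ q, (z q : ℕ) = s → q < x₀)
    (hz0 : #(rset z 0) = r + 1) : z ∈ dShadow (A ∩ Bexact k (n + 1) r) := by
  obtain ⟨hym, hys, -⟩ := mem_classSet.1 (mem_inter.1 hy).2
  have hzeros : 1 < #(rset z 0) := by omega
  obtain ⟨j, hjz, hjx₀⟩ := exists_mem_ne hzeros x₀
  have hzj : z j = 0 := mem_rset_zero.1 hjz
  by_cases hyj : y j = 0
  · obtain ⟨i, hiz, hij⟩ := exists_mem_ne hzeros j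
    have hyx₀ : (y x₀ : ℕ) = s := mem_rset.1 (hys ▸ mem_singleton_self x₀)
    have hk : 1 < k + 1 := by have := (y x₀).isLt; omega
    refine mem_dShadow_of_raise (t := ⟨1, hk⟩) hA hy hzle hzs hz0 (mem_rset_zero.1 hiz)
      (by simp [Fin.ext_iff]) (by simp; omega) hjx₀ ?_
    rw [Function.update_of_ne hij.symm, hzj, hyj]
  · have hyjs : (y j : ℕ) ≠ s := fun h => hjx₀ (mem_singleton.1 (hys ▸ mem_rset.2 h))
    have hyjle : (y j : ℕ) ≤ s := hym ▸ val_le_mval y j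
    exact mem_dShadow_of_raise hA hy hzle hzs hz0 hzj hyj (by omega) hjx₀ (Function.update_self ..)

end

theorem claim7_general (k n r s : ℕ) (hr1 : 1 ≤ r) (hs1 : 2 ≤ s)
    (A : Finset (Fin (n + 1) → Fin (k + 1))) (hA : IsCompressed A)
    (X : Finset (Fin (n + 1))) (hXcard : X.card = 1)
    (hX : (classSet k (n + 1) s r X ∩ (A ∩ Bexact k (n + 1) r)).Nonempty) :
    ∀ S : Finset (Fin (n + 1)), S.Nonempty → S.card ≤ (n + 1) - r → binLT S X →
      dShadow (classSet k (n + 1) s r S) ⊆ dShadow (A ∩ Bexact k (n + 1) r) := by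
  obtain ⟨x₀, rfl⟩ := card_eq_one.1 hXcard
  obtain ⟨y, hyC, hyA, -⟩ := by simpa only [Finset.Nonempty, mem_inter] using hX
  intro S _ _ hSx₀ z hz
  simp only [dShadow, mem_biUnion, mem_image, mem_filter, mem_univ, true_and] at hz
  obtain ⟨x, hx, i, hxi, rfl⟩ := hz
  obtain ⟨hxm, rfl, hx0⟩ := mem_classSet.1 hx
  rw [binLT_iff_toColex_lt, Finset.Colex.toColex_lt_singleton] at hSx₀
  have hs0 : ((0 : Fin (k + 1)) : ℕ) ≠ s := by rw [Fin.val_zero]; omega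
  refine mem_dShadow_of_compressed hA hs1 hr1 (mem_inter.2 ⟨hyA, hyC⟩)
    (val_update_le (fun q => hxm ▸ val_le_mval x q) i (by simp))
    (fun q hq => hSx₀ q (mem_rset.2 (val_eq_of_val_update_eq hs0 hq))) ?_
  rw [rset_update_zero, card_insert_of_notMem (mt mem_rset_zero.1 hxi), hx0]

/-- **Claim 7.** Let `n ≥ 3`, `1 ≤ r ≤ n − 2`, `2 ≤ s ≤ k − 1`, and let `A ⊆ [k]^n`
be compressed with `B_{≥ r+1} ∪ ([s]^n ∩ B_r) ⊆ A ⊆ B_{≥ r+1} ∪ ([s+1]^n ∩ B_r)`;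
set `D = A ∩ B_r`. If `X` is nonempty of size `1` with `C_X ∩ D ≠ ∅`, then for every
nonempty `S` of size at most `n − r` with `S <_bin X` we have `d(C_S) ⊆ d(D)`.
(Dimension `n ≥ 3` is rendered as `n + 1` with `n ≥ 2`; alphabet `[k]` as `Fin (k+1)`,
so `s ≤ k`.) -/
theorem claim7 (k n r s : ℕ) (hn : 2 ≤ n) (hr1 : 1 ≤ r) (hr2 : r + 1 ≤ n)
    (hs1 : 2 ≤ s) (hs2 : s ≤ k)
    (A : Finset (Fin (n + 1) → Fin (k + 1))) (hA : IsCompressed A)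
    (hlow : Bge k (n + 1) (r + 1) ∪ (box k (n + 1) s ∩ Bexact k (n + 1) r) ⊆ A)
    (hhigh : A ⊆ Bge k (n + 1) (r + 1) ∪ (box k (n + 1) (s + 1) ∩ Bexact k (n + 1) r))
    (X : Finset (Fin (n + 1))) (hXcard : X.card = 1)
    (hX : (classSet k (n + 1) s r X ∩ (A ∩ Bexact k (n + 1) r)).Nonempty) :
    ∀ S : Finset (Fin (n + 1)), S.Nonempty → S.card ≤ (n + 1) - r → binLT S X →
      dShadow (classSet k (n + 1) s r S) ⊆ dShadow (A ∩ Bexact k (n + 1) r) :=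
  claim7_general k n r s hr1 hs1 A hA X hXcard hX
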